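/- There exists a constant C > 0 such that for every x ∈ S¹, every b > 0 and every n ≥ 1, the number of preimages y ∈ E^{−n}(x) with (E^n)′(y) ≤ e^{bn} is at most C e^{bn}. -/

import Mathlib

noncomputable section

open Filter Set Topology MeasureTheory

/-- The circle `ℝ/ℤ`. -/
abbrev 𝕊 : Type := UnitAddCircle

/-- The canonical representative in `[0,1)` of a point of the circle. -/
def rep (x : 𝕊) : ℝ := (AddCircle.equivIco 1 0 x : ℝ)

/-- A `C^r` expanding map of the circle of degree `ℓ`, presented by a lift `ℝ → ℝ`,
together with the expansion constants `1 < λ ≤ Λ` bounding its derivative. -/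
structure ExpMap (r : ℕ) (ℓ : ℕ) : Type where
  toFun : ℝ → ℝ
  contDiff : ContDiff ℝ r toFun
  degree : ∀ x : ℝ, toFun (x + 1) = toFun x + ℓ
  lam : ℝ
  Lam : ℝ
  one_lt_lam : 1 < lam
  lam_le_Lam : lam ≤ Lam
  lam_le_deriv : ∀ x : ℝ, lam ≤ deriv toFun x
  deriv_le_Lam : ∀ x : ℝ, deriv toFun x ≤ Lam

/-- A real-valued `C^s` function on the circle, presented by a `1`-periodic lift. -/
structure CrFun (s : ℕ∞) : Type where
  toFun : ℝ → ℝ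
  contDiff : ContDiff ℝ s toFun
  periodic : ∀ x : ℝ, toFun (x + 1) = toFun x

variable {r ℓ : ℕ}

/-- The induced map on the circle. -/
def ExpMap.map (E : ExpMap r ℓ) : 𝕊 → 𝕊 := fun x => ((E.toFun (rep x) : ℝ) : 𝕊)

/-- `(E^n)'(x)`, the derivative of the `n`-th iterate at a circle point. -/
def ExpMap.derivn (E : ExpMap r ℓ) (n : ℕ) (x : 𝕊) : ℝ := deriv (E.toFun^[n]) (rep x)

/-- `‖τ'‖_∞`, the sup-norm of the derivative of `τ`. -/
def CrFun.dsup {s : ℕ∞} (τ : CrFun s) : ℝ :=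
  sSup ((fun x => |deriv τ.toFun x|) '' Set.Icc (0:ℝ) 1)

/-- The skew product `f = f_{E,τ} : 𝕋² → 𝕋²`, `f(x,s) = (E x, s + τ x)`. -/
def skew (E : ExpMap r ℓ) {s : ℕ∞} (τ : CrFun s) : 𝕊 × 𝕊 → 𝕊 × 𝕊 :=
  fun z => (E.map z.1, z.2 + ((τ.toFun (rep z.1) : ℝ) : 𝕊))

/-- The Jacobian matrix `Df(z)`, depending only on the base coordinate. -/
def Jac1 (E : ExpMap r ℓ) {s : ℕ∞} (τ : CrFun s) (x : 𝕊) : Matrix (Fin 2) (Fin 2) ℝ :=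
  !![deriv E.toFun (rep x), 0; deriv τ.toFun (rep x), 1]

/-- The Jacobian matrix `Df^n(z)` of the `n`-th iterate. -/
def Jacn (E : ExpMap r ℓ) {s : ℕ∞} (τ : CrFun s) : ℕ → 𝕊 × 𝕊 → Matrix (Fin 2) (Fin 2) ℝ
  | 0, _ => 1
  | n+1, z => Jacn E τ n (skew E τ z) * Jac1 E τ z.1

/-- `Df^n` as a function of the base point only. -/
def JacnB (E : ExpMap r ℓ) {s : ℕ∞} (τ : CrFun s) (n : ℕ) (x : 𝕊) : Matrix (Fin 2) (Fin 2) ℝ :=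
  Jacn E τ n (x, (0 : 𝕊))

/-- The cone `K_R = {(ξ,η) : |η| ≤ ϑ_R |ξ|}` with `ϑ_R = R/(λ-1)`. -/
def ExpMap.cone (E : ExpMap r ℓ) (R : ℝ) : Set (Fin 2 → ℝ) :=
  {v | |v 1| ≤ R / (E.lam - 1) * |v 0|}

/-- A unit vector of `ℝ²`. -/
def IsUnitVec (v : Fin 2 → ℝ) : Prop := v 0 ^ 2 + v 1 ^ 2 = 1

/-- `𝔫(τ,R;n) = sup_z sup_v #{ζ ∈ f^{-n}(z) : v ∈ Df^n(ζ) K_R}`. -/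
def nQ (E : ExpMap r ℓ) {s : ℕ∞} (τ : CrFun s) (R : ℝ) (n : ℕ) : ℝ :=
  sSup {c : ℝ | ∃ (z : 𝕊 × 𝕊) (v : Fin 2 → ℝ), IsUnitVec v ∧
    c = ({ζ : 𝕊 × 𝕊 | (skew E τ)^[n] ζ = z ∧
      v ∈ (Jacn E τ n ζ).mulVec '' E.cone R}.ncard : ℝ)}

/-- `𝔫(τ) = lim_n 𝔫(τ,R;n)^{1/n}` (computed with the choice `R = ‖τ'‖_∞ + 1`). -/
def nlim (E : ExpMap r ℓ) {s : ℕ∞} (τ : CrFun s) : ℝ :=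
  limUnder atTop (fun n : ℕ => nQ E τ (τ.dsup + 1) n ^ ((n : ℝ)⁻¹))

/-- The `C^r` distance between two (lifts of) functions on the circle. -/
def crDist (r : ℕ) (f g : ℝ → ℝ) : ℝ :=
  sSup {c : ℝ | ∃ i ≤ r, ∃ x ∈ Set.Icc (0:ℝ) 1, c = |iteratedDeriv i f x - iteratedDeriv i g x|}

/-- `x_α`: the preimage point of `x` coded by the word `α = (α_n, …, α_1)`,
given the system `g` of inverse branches of `E`; here `α i` is the letter `α_{i+1}`. -/
def codePt (g : Fin ℓ → 𝕊 → 𝕊) : {n : ℕ} → (Fin n → Fin ℓ) → 𝕊 → 𝕊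
  | 0, _, x => x
  | n+1, α, x => g (α (Fin.last n)) (codePt g (fun i : Fin n => α i.castSucc) x)

/-- `[α]_p`, the truncation of a word to length `p`. -/
def trunc {ℓ n : ℕ} (α : Fin n → Fin ℓ) (p : ℕ) (h : p ≤ n) : Fin p → Fin ℓ :=
  fun i => α (Fin.castLE h i)

/-- `S_n(x;α;ψ) = Σ_{k=1}^n ψ'(x_{[α]_k}) / (E^k)'(x_{[α]_k})`. -/
def Ssum (E : ExpMap r ℓ) (g : Fin ℓ → 𝕊 → 𝕊) (ψ : ℝ → ℝ) {n : ℕ}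
    (α : Fin n → Fin ℓ) (x : 𝕊) : ℝ :=
  ∑ k : Fin n, deriv ψ (rep (codePt g (trunc α (k.1+1) k.isLt) x)) /
    E.derivn (k.1+1) (codePt g (trunc α (k.1+1) k.isLt) x)

/-- `S(x;ω) = Σ_{k=1}^∞ τ'(x_{[ω]_k}) / (E^k)'(x_{[ω]_k})` for an infinite word `ω`. -/
def Sinf (E : ExpMap r ℓ) (g : Fin ℓ → 𝕊 → 𝕊) (ψ : ℝ → ℝ) (y : 𝕊) (ω : ℕ → Fin ℓ) : ℝ :=
  ∑' k : ℕ, deriv ψ (rep (codePt g (fun i : Fin (k+1) => ω i) y)) /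
    E.derivn (k+1) (codePt g (fun i : Fin (k+1) => ω i) y)

/-- Faure's counting function `Ñ_{R̃}(n)`. -/
def Ntilde (E : ExpMap r ℓ) (g : Fin ℓ → 𝕊 → 𝕊) {s : ℕ∞} (τ : CrFun s) (Rt : ℝ) (n : ℕ) : ℝ :=
  sSup {c : ℝ | ∃ (y : 𝕊) (η : ℝ),
    c = ({α : Fin n → Fin ℓ | ∃ ω : ℕ → Fin ℓ, (∀ i : Fin n, ω i = α i) ∧
      |η - Sinf E g τ.toFun y ω| ≤ Rt * (E.derivn n (codePt g α y))⁻¹}.ncard : ℝ)}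

/-- `𝐧(τ,R;n)`. -/
def nnQ (E : ExpMap r ℓ) {s : ℕ∞} (τ : CrFun s) (R : ℝ) (n : ℕ) : ℝ :=
  sSup {c : ℝ | ∃ (z : 𝕊 × 𝕊) (v : Fin 2 → ℝ), IsUnitVec v ∧
    c = ∑ᶠ ζ ∈ {ζ : 𝕊 × 𝕊 | (skew E τ)^[n] ζ = z ∧
        v ∈ (Jacn E τ n ζ).mulVec '' E.cone R}, ((Jacn E τ n ζ).det)⁻¹}

/-- `𝐧(τ) = limsup_n 𝐧(τ,R;n)^{1/n}` (with `R = ‖τ'‖_∞ + 1`). -/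
def nnlim (E : ExpMap r ℓ) {s : ℕ∞} (τ : CrFun s) : ℝ :=
  limsup (fun n : ℕ => nnQ E τ (τ.dsup + 1) n ^ ((n : ℝ)⁻¹)) atTop

/-- `𝐦(τ,R;n)`. -/
def mmQ (E : ExpMap r ℓ) {s : ℕ∞} (τ : CrFun s) (R : ℝ) (n : ℕ) : ℝ :=
  sSup {c : ℝ | ∃ (z w : 𝕊 × 𝕊), (skew E τ)^[n] w = z ∧
    c = ∑ᶠ ζ ∈ {ζ : 𝕊 × 𝕊 | (skew E τ)^[n] ζ = z ∧
        ((Jacn E τ n ζ).mulVec '' E.cone R) ∩ ((Jacn E τ n w).mulVec '' E.cone R) = {0}},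
      ((Jacn E τ n ζ).det)⁻¹}

/-- `𝐦(τ) = limsup_n 𝐦(τ,R;n)^{1/n}` (with `R = ‖τ'‖_∞ + 1`). -/
def mmlim (E : ExpMap r ℓ) {s : ℕ∞} (τ : CrFun s) : ℝ :=
  limsup (fun n : ℕ => mmQ E τ (τ.dsup + 1) n ^ ((n : ℝ)⁻¹)) atTop

/-- `χ = lim_n (min_x (E^n)'(x))^{-1/n}`. -/
def chi (E : ExpMap r ℓ) : ℝ :=
  limUnder atTop (fun n : ℕ => (sInf (Set.range (E.derivn n))) ^ (-((n : ℝ)⁻¹)))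

/-- The Gram-determinant Jacobian `Jac(M) = √(det (M Mᵀ))` of a `p × m` matrix,
which equals the modulus of the Jacobian determinant of the restriction of the
associated linear map to the orthogonal complement of its kernel when the map is
surjective, and `0` otherwise. -/
def gramJac {p m : ℕ} (M : Matrix (Fin p) (Fin m) ℝ) : ℝ :=
  Real.sqrt (M * M.transpose).det

/-- The Jacobian of a linear map between Euclidean spaces. -/
def linJac {d e : ℕ} (L : EuclideanSpace ℝ (Fin d) →ₗ[ℝ] EuclideanSpace ℝ (Fin e)) : ℝ :=
  gramJac (LinearMap.toMatrix (EuclideanSpace.basisFun (Fin d) ℝ).toBasis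
    (EuclideanSpace.basisFun (Fin e) ℝ).toBasis L)



/-!
Bounded distortion. Since `E` is `C²`, `E'` is Lipschitz and bounded below by `λ > 1`, so two
orbits that stay `λ^{-(n-k)}`-close at every time `k < n` have derivatives of `E^n` within a
factor `D = exp (K / (λ (λ - 1)))` of each other. If `t < t'` are lifts of two points of
`E^{-n}(x)`, then `E^n` maps `[t, t']` over a whole unit interval `[E^n t, E^n t + 1]`; the
branch doing so has length at least `1 / (D (E^n)'(t))` by the mean value theorem. Hence the
preimages with `(E^n)' ≤ e^{bn}` are `1 / (D e^{bn})`-separated in `[0, 1)`, and there are at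
most `D e^{bn} + 1 ≤ 2 D e^{bn}` of them.
-/

open Function

section Expanding

variable {F : ℝ → ℝ} {lam : ℝ}

lemma deriv_iterate_eq_prod (hF : Differentiable ℝ F) (n : ℕ) (t : ℝ) :
    deriv F^[n] t = ∏ k ∈ Finset.range n, deriv F (F^[k] t) := by
  induction n with
  | zero => simp
  | succ n ih =>
    rw [iterate_succ', Finset.prod_range_succ, ← ih, deriv_comp t (hF _) ((hF.iterate n) t),
      mul_comm]

lemma pow_mul_sub_le_iterate_sub (hF : Differentiable ℝ F) (hlam : 0 ≤ lam)
    (hlo : ∀ x, lam ≤ deriv F x) (n : ℕ) {a b : ℝ} (hab : a ≤ b) :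
    lam ^ n * (b - a) ≤ F^[n] b - F^[n] a := by
  induction n generalizing a b with
  | zero => simp
  | succ n ih =>
    have hFab : F a ≤ F b := monotone_of_deriv_nonneg hF (fun x => hlam.trans (hlo x)) hab
    calc lam ^ (n + 1) * (b - a) = lam ^ n * (lam * (b - a)) := by ring
      _ ≤ lam ^ n * (F b - F a) :=
        mul_le_mul_of_nonneg_left (mul_sub_le_image_sub_of_le_deriv hF hlo hab)
          (pow_nonneg hlam n)
      _ ≤ F^[n + 1] b - F^[n + 1] a := ih hFab

lemma iterate_sub_le_div_pow (hF : Differentiable ℝ F) (hlam : 0 < lam)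
    (hlo : ∀ x, lam ≤ deriv F x) {k n : ℕ} (hkn : k ≤ n) {a b : ℝ} (hab : a ≤ b) :
    F^[k] b - F^[k] a ≤ (F^[n] b - F^[n] a) / lam ^ (n - k) := by
  have hmono : Monotone F^[k] :=
    (monotone_of_deriv_nonneg hF fun x => hlam.le.trans (hlo x)).iterate k
  have hsplit : ∀ s, F^[n] s = F^[n - k] (F^[k] s) := fun s => by
    rw [← iterate_add_apply, Nat.sub_add_cancel hkn]
  rw [le_div_iff₀ (pow_pos hlam _), mul_comm, hsplit, hsplit]
  exact pow_mul_sub_le_iterate_sub hF hlam.le hlo _ (hmono hab)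

lemma sum_range_inv_pow_sub_le (hlam : 1 < lam) (n : ℕ) :
    ∑ k ∈ Finset.range n, (lam ^ (n - k))⁻¹ ≤ (lam - 1)⁻¹ := by
  have hinv : lam⁻¹ < 1 := inv_lt_one_of_one_lt₀ hlam
  calc ∑ k ∈ Finset.range n, (lam ^ (n - k))⁻¹
      = ∑ i ∈ Finset.Ico 1 (n + 1), lam⁻¹ ^ i := by
        rw [← Finset.sum_range_reflect, Finset.sum_Ico_eq_sum_range]
        refine Finset.sum_congr (by simp) fun k hk => ?_
        rw [inv_pow]
        congr 2
        have := Finset.mem_range.mp hk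
        omega
    _ ≤ lam⁻¹ ^ 1 / (1 - lam⁻¹) := geom_sum_Ico_le_of_lt_one (by positivity) hinv
    _ = (lam - 1)⁻¹ := by
        have : lam - 1 ≠ 0 := sub_ne_zero.mpr hlam.ne'
        field_simp

lemma deriv_le_mul_exp_of_lipschitzWith {K : NNReal} (hlam : 0 < lam)
    (hlo : ∀ x, lam ≤ deriv F x) (hlip : LipschitzWith K (deriv F)) (a b : ℝ) :
    deriv F a ≤ deriv F b * Real.exp (K / lam * |a - b|) := by
  have hdiff : deriv F a ≤ deriv F b + K * |a - b| := by
    have := hlip.dist_le_mul a b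
    rw [Real.dist_eq, Real.dist_eq] at this
    linarith [le_abs_self (deriv F a - deriv F b)]
  have hgain : K * |a - b| ≤ deriv F b * (K / lam * |a - b|) := by
    calc (K : ℝ) * |a - b| = lam * (K / lam * |a - b|) := by field_simp
      _ ≤ deriv F b * (K / lam * |a - b|) := by gcongr; exact hlo b
  calc deriv F a ≤ deriv F b * (1 + K / lam * |a - b|) := by linarith
    _ ≤ deriv F b * Real.exp (K / lam * |a - b|) := by
        gcongr
        · exact hlam.le.trans (hlo b)
        · linarith [Real.add_one_le_exp (K / lam * |a - b|)]

lemma deriv_iterate_le_exp_mul (hF : Differentiable ℝ F) (hlam : 1 < lam)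
    (hlo : ∀ x, lam ≤ deriv F x) {K : NNReal} (hlip : LipschitzWith K (deriv F)) {n : ℕ}
    {t η : ℝ} (htη : t ≤ η) (himage : F^[n] η - F^[n] t ≤ 1) :
    deriv F^[n] η ≤ Real.exp (K / (lam * (lam - 1))) * deriv F^[n] t := by
  have hlam0 : 0 < lam := one_pos.trans hlam
  have hclose : ∀ k ∈ Finset.range n, |F^[k] η - F^[k] t| ≤ (lam ^ (n - k))⁻¹ := by
    intro k hk
    have hmono : Monotone F^[k] :=
      (monotone_of_deriv_nonneg hF fun x => hlam0.le.trans (hlo x)).iterate k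
    rw [abs_of_nonneg (sub_nonneg.mpr (hmono htη)), inv_eq_one_div]
    calc F^[k] η - F^[k] t ≤ (F^[n] η - F^[n] t) / lam ^ (n - k) :=
          iterate_sub_le_div_pow hF hlam0 hlo (Finset.mem_range.mp hk).le htη
      _ ≤ 1 / lam ^ (n - k) := by gcongr
  have hsum : K / lam * ∑ k ∈ Finset.range n, |F^[k] η - F^[k] t| ≤ K / (lam * (lam - 1)) :=
    calc K / lam * ∑ k ∈ Finset.range n, |F^[k] η - F^[k] t|
        ≤ K / lam * (lam - 1)⁻¹ := by
          gcongr
          exact (Finset.sum_le_sum hclose).trans (sum_range_inv_pow_sub_le hlam n)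
      _ = K / (lam * (lam - 1)) := by rw [div_mul_eq_div_div, ← div_eq_mul_inv]
  rw [deriv_iterate_eq_prod hF, deriv_iterate_eq_prod hF]
  calc ∏ k ∈ Finset.range n, deriv F (F^[k] η)
      ≤ ∏ k ∈ Finset.range n, deriv F (F^[k] t) * Real.exp (K / lam * |F^[k] η - F^[k] t|) :=
        Finset.prod_le_prod (fun k _ => hlam0.le.trans (hlo _))
          fun k _ => deriv_le_mul_exp_of_lipschitzWith hlam0 hlo hlip _ _
    _ = Real.exp (K / lam * ∑ k ∈ Finset.range n, |F^[k] η - F^[k] t|) *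
          ∏ k ∈ Finset.range n, deriv F (F^[k] t) := by
        rw [Finset.prod_mul_distrib, Finset.mul_sum, Real.exp_sum, mul_comm]
    _ ≤ Real.exp (K / (lam * (lam - 1))) * ∏ k ∈ Finset.range n, deriv F (F^[k] t) := by
        gcongr
        exact Finset.prod_nonneg fun k _ => hlam0.le.trans (hlo _)

lemma inv_le_sub_of_iterate_sub_eq_int (hF : Differentiable ℝ F) (hlam : 1 < lam)
    (hlo : ∀ x, lam ≤ deriv F x) {K : NNReal} (hlip : LipschitzWith K (deriv F)) {n : ℕ}
    {T t t' : ℝ} (htt' : t < t') (hint : ∃ m : ℤ, F^[n] t' - F^[n] t = m)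
    (hT : deriv F^[n] t ≤ T) :
    (Real.exp (K / (lam * (lam - 1))) * T)⁻¹ ≤ t' - t := by
  have hlam0 : 0 < lam := one_pos.trans hlam
  have hmono : StrictMono F^[n] :=
    (strictMono_of_deriv_pos fun x => hlam0.trans_le (hlo x)).iterate n
  have hcont : Continuous F^[n] := (hF.iterate n).continuous
  have hgap : F^[n] t + 1 ≤ F^[n] t' := by
    obtain ⟨m, hm⟩ := hint
    have hpos : (0 : ℝ) < m := hm ▸ sub_pos.mpr (hmono htt')
    have hm : (0 : ℤ) < m := by exact_mod_cast hpos
    have : (1 : ℝ) ≤ m := by exact_mod_cast hm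
    linarith
  -- `ξ` ends the branch starting at `t` that covers a unit interval
  obtain ⟨ξ, ⟨htξ, hξt'⟩, hξ⟩ :=
    intermediate_value_Icc htt'.le hcont.continuousOn ⟨by linarith, hgap⟩
  have htξ : t < ξ := lt_of_le_of_ne htξ fun h => by rw [← h] at hξ; linarith
  obtain ⟨η, ⟨htη, hηξ⟩, hη⟩ :=
    exists_deriv_eq_slope F^[n] htξ hcont.continuousOn (hF.iterate n).differentiableOn
  rw [hξ, add_sub_cancel_left] at hη
  have hdist := deriv_iterate_le_exp_mul hF hlam hlo hlip htη.le
    (by linarith [hmono hηξ] : F^[n] η - F^[n] t ≤ 1)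
  have hslope : (ξ - t)⁻¹ ≤ Real.exp (K / (lam * (lam - 1))) * T := by
    rw [inv_eq_one_div, ← hη]
    exact hdist.trans (mul_le_mul_of_nonneg_left hT (Real.exp_pos _).le)
  linarith [inv_le_of_inv_le₀ (sub_pos.mpr htξ) hslope]

end Expanding

lemma ncard_le_inv_add_one_of_separated {s : Set ℝ} (hs : s ⊆ Ico 0 1) {δ : ℝ} (hδ : 0 < δ)
    (hsep : ∀ t ∈ s, ∀ t' ∈ s, t < t' → δ ≤ t' - t) :
    (s.ncard : ℝ) ≤ δ⁻¹ + 1 := by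
  have hmaps : ∀ t ∈ s, ⌊t / δ⌋₊ ∈ (Finset.range ⌈δ⁻¹⌉₊ : Set ℕ) := by
    intro t ht
    rw [Finset.coe_range, mem_Iio, Nat.floor_lt (div_nonneg (hs ht).1 hδ.le)]
    calc t / δ < 1 / δ := by gcongr; exact (hs ht).2
      _ ≤ ⌈δ⁻¹⌉₊ := by rw [one_div]; exact Nat.le_ceil _
  -- two points in the same bin of width `δ` are closer than `δ`
  have hinj : InjOn (fun t => ⌊t / δ⌋₊) s := by
    have hlt : ∀ t ∈ s, ∀ t' ∈ s, t < t' → ⌊t / δ⌋₊ ≠ ⌊t' / δ⌋₊ := by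
      intro t ht t' ht' htt' heq
      have h1 := Nat.lt_floor_add_one (t' / δ)
      have h2 := Nat.floor_le (div_nonneg (hs ht).1 hδ.le)
      rw [← heq] at h1
      have : (t' - t) / δ < 1 := by rw [sub_div]; linarith
      linarith [hsep t ht t' ht' htt', (div_lt_one hδ).mp this]
    intro t ht t' ht' heq
    by_contra hne
    rcases lt_or_gt_of_ne hne with h | h
    · exact hlt t ht t' ht' h heq
    · exact hlt t' ht' t ht h heq.symm
  calc (s.ncard : ℝ) ≤ ⌈δ⁻¹⌉₊ := by
        have := ncard_le_ncard_of_injOn _ hmaps hinj (Finset.finite_toSet _)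
        rw [ncard_coe_finset, Finset.card_range] at this
        exact_mod_cast this
    _ ≤ δ⁻¹ + 1 := (Nat.ceil_lt_add_one (by positivity)).le

lemma Function.Periodic.deriv {f : ℝ → ℝ} {c : ℝ} (h : Periodic f c) :
    Periodic (deriv f) c :=
  fun x => by rw [← deriv_comp_add_const, h.funext]

lemma coe_eq_coe_iff_exists_int {a b : ℝ} : (a : 𝕊) = b ↔ ∃ m : ℤ, a - b = m := by
  rw [QuotientAddGroup.eq_iff_sub_mem, AddSubgroup.mem_zmultiples_iff]
  simp [eq_comm]

lemma coe_rep (y : 𝕊) : ((rep y : ℝ) : 𝕊) = y :=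
  (AddCircle.equivIco 1 0).symm_apply_apply y

lemma rep_mem_Ico (y : 𝕊) : rep y ∈ Ico (0 : ℝ) 1 := by
  simpa [rep] using (AddCircle.equivIco 1 0 y).2

lemma rep_injective : Injective rep :=
  fun a b h => by rw [← coe_rep a, h, coe_rep]

namespace ExpMap

variable (E : ExpMap r ℓ)

lemma differentiable (hr : 1 ≤ r) : Differentiable ℝ E.toFun :=
  E.contDiff.differentiable (by norm_cast; omega)

lemma toFun_add_int (t : ℝ) (m : ℤ) : E.toFun (t + m) = E.toFun t + m * ℓ := by
  have hper : Periodic (fun s => E.toFun s - ℓ * s) 1 := fun s => by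
    simp only [E.degree]; ring
  have := hper.int_mul m t
  simp only [mul_one] at this
  linarith

lemma periodic_deriv : Periodic (deriv E.toFun) 1 := fun x => by
  rw [← deriv_comp_add_const, funext E.degree, deriv_add_const]

lemma exists_lipschitzWith_deriv (hr : 2 ≤ r) : ∃ K, LipschitzWith K (deriv E.toFun) := by
  have hC1 : ContDiff ℝ 1 (deriv E.toFun) :=
    (contDiff_succ_iff_deriv.mp (E.contDiff.of_le (by exact_mod_cast hr))).2.2
  obtain ⟨C, hC⟩ := isBounded_iff_forall_norm_le.mp <|
    E.periodic_deriv.deriv.isBounded_of_continuous one_ne_zero (hC1.continuous_deriv le_rfl)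
  refine ⟨C.toNNReal,
    lipschitzWith_of_nnnorm_deriv_le (hC1.differentiable one_ne_zero) fun x => ?_⟩
  rw [← NNReal.coe_le_coe, coe_nnnorm]
  exact (hC _ (mem_range_self x)).trans (Real.le_coe_toNNReal C)

lemma map_coe (t : ℝ) : E.map t = (E.toFun t : 𝕊) := by
  obtain ⟨m, hm⟩ := coe_eq_coe_iff_exists_int.mp (coe_rep (t : 𝕊))
  rw [map, eq_add_of_sub_eq' hm, toFun_add_int, coe_eq_coe_iff_exists_int]
  exact ⟨m * ℓ, by push_cast; ring⟩

lemma iterate_map_coe (n : ℕ) (t : ℝ) : E.map^[n] t = (E.toFun^[n] t : 𝕊) := by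
  induction n generalizing t with
  | zero => rfl
  | succ n ih => rw [iterate_succ_apply, iterate_succ_apply, map_coe, ih]

lemma exists_int_iterate_sub_eq {n : ℕ} {x y y' : 𝕊} (hy : E.map^[n] y = x)
    (hy' : E.map^[n] y' = x) : ∃ m : ℤ, E.toFun^[n] (rep y') - E.toFun^[n] (rep y) = m := by
  rw [← coe_rep y, iterate_map_coe] at hy
  rw [← coe_rep y', iterate_map_coe] at hy'
  exact coe_eq_coe_iff_exists_int.mp (hy'.trans hy.symm)

end ExpMap

theorem stmt7_general (r ℓ : ℕ) (hr : 2 ≤ r) (E : ExpMap r ℓ) :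
    ∃ C : ℝ, 0 < C ∧ ∀ (x : 𝕊) (b : ℝ), 0 < b → ∀ n : ℕ, 1 ≤ n →
      (({y : 𝕊 | E.map^[n] y = x ∧ E.derivn n y ≤ Real.exp (b * n)}.ncard : ℝ)) ≤
        C * Real.exp (b * n) := by
  obtain ⟨K, hK⟩ := E.exists_lipschitzWith_deriv hr
  set D := Real.exp (K / (E.lam * (E.lam - 1)))
  have hD : 1 ≤ D := Real.one_le_exp (by have := E.one_lt_lam; positivity)
  refine ⟨2 * D, by positivity, fun x b hb n _ => ?_⟩
  set T := Real.exp (b * n)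
  have hT : 1 ≤ T := Real.one_le_exp (by positivity)
  set S := {y : 𝕊 | E.map^[n] y = x ∧ E.derivn n y ≤ T}
  have hsep : ∀ t ∈ rep '' S, ∀ t' ∈ rep '' S, t < t' → (D * T)⁻¹ ≤ t' - t := by
    rintro _ ⟨y, hy, rfl⟩ _ ⟨y', hy', rfl⟩ hlt
    exact inv_le_sub_of_iterate_sub_eq_int (E.differentiable (by omega)) E.one_lt_lam
      E.lam_le_deriv hK hlt (E.exists_int_iterate_sub_eq hy.1 hy'.1) hy.2
  have hcount := ncard_le_inv_add_one_of_separated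
    (image_subset_iff.mpr fun y _ => rep_mem_Ico y) (by positivity) hsep
  rw [ncard_image_of_injective _ rep_injective, inv_inv] at hcount
  nlinarith

/-- Lemma 2.1. There is a constant `C > 0` such that for every `x ∈ 𝕊¹`,
every `b > 0` and every `n ≥ 1`, the number of preimages `y ∈ E^{-n}(x)` with
`(E^n)'(y) ≤ e^{bn}` is at most `C e^{bn}`. -/
theorem stmt7 (r ℓ : ℕ) (hr : 2 ≤ r) (hl : 2 ≤ ℓ) (E : ExpMap r ℓ) :
    ∃ C : ℝ, 0 < C ∧ ∀ (x : 𝕊) (b : ℝ), 0 < b → ∀ n : ℕ, 1 ≤ n →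
      (({y : 𝕊 | E.map^[n] y = x ∧ E.derivn n y ≤ Real.exp (b * n)}.ncard : ℝ)) ≤
        C * Real.exp (b * n) :=
  stmt7_general r ℓ hr E
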